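/- (No Liar sentence) Let U be a consistent fixed point of G. There is no sentence A with #A ∈ G(U) ∪ F(U) such that the Gödel number of the sentence `iff A (neg (Tr (#A)))` belongs to G(U). -/

import Mathlib

/-- Sentences of the augmented language 𝓛. -/
inductive Sent (B : Type) : Type where
  | base : B → Sent B
  | Tr : ℕ → Sent B
  | exT : Sent B
  | allT : Sent B
  | neg : Sent B → Sent B
  | or : Sent B → Sent B → Sent B
  | and : Sent B → Sent B → Sent B
  | imp : Sent B → Sent B → Sent B
  | iff : Sent B → Sent B → Sent B

variable {B : Type}

mutual
/-- `isTrue gn v U A` means `#A ∈ G(U)` according to rules (r1)–(r9). -/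
def isTrue (gn : Sent B → ℕ) (v : B → Bool) (U : Set ℕ) : Sent B → Prop
  | .base b => v b = true
  | .Tr n => ∃ A : Sent B, n = gn A ∧ gn A ∈ U
  | .exT => ∃ n : ℕ, ∃ A : Sent B, n = gn A ∧ gn A ∈ U
  | .allT => ∀ n : ℕ, ∃ A : Sent B, n = gn A ∧ gn A ∈ U
  | .neg A => isFalse gn v U A
  | .or A C => isTrue gn v U A ∨ isTrue gn v U C
  | .and A C => isTrue gn v U A ∧ isTrue gn v U C
  | .imp A C => isFalse gn v U A ∨ isTrue gn v U C
  | .iff A C => (isTrue gn v U A ∧ isTrue gn v U C) ∨ (isFalse gn v U A ∧ isFalse gn v U C)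

/-- `isFalse gn v U A` means `#A ∈ F(U)` according to rules (r1)–(r9). -/
def isFalse (gn : Sent B → ℕ) (v : B → Bool) (U : Set ℕ) : Sent B → Prop
  | .base b => v b = false
  | .Tr n => ∃ A : Sent B, n = gn A ∧ gn (.neg A) ∈ U
  | .exT => ∀ n : ℕ, ∃ A : Sent B, n = gn A ∧ gn (.neg A) ∈ U
  | .allT => ∃ n : ℕ, ∃ A : Sent B, n = gn A ∧ gn (.neg A) ∈ U
  | .neg A => isTrue gn v U A
  | .or A C => isFalse gn v U A ∧ isFalse gn v U C
  | .and A C => isFalse gn v U A ∨ isFalse gn v U C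
  | .imp A C => isTrue gn v U A ∧ isFalse gn v U C
  | .iff A C => (isTrue gn v U A ∧ isFalse gn v U C) ∨ (isFalse gn v U A ∧ isTrue gn v U C)
end

/-- `G U`: Gödel numbers of sentences declared true over `U`. -/
def GSet (gn : Sent B → ℕ) (v : B → Bool) (U : Set ℕ) : Set ℕ :=
  { n | ∃ A : Sent B, n = gn A ∧ isTrue gn v U A }

/-- `F U`: Gödel numbers of sentences declared false over `U`. -/
def FSet (gn : Sent B → ℕ) (v : B → Bool) (U : Set ℕ) : Set ℕ :=
  { n | ∃ A : Sent B, n = gn A ∧ isFalse gn v U A }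

/-- `U` is consistent: no sentence has both itself and its negation in `U`. -/
def Consistent (gn : Sent B → ℕ) (U : Set ℕ) : Prop :=
  ¬ ∃ A : Sent B, gn A ∈ U ∧ gn (.neg A) ∈ U

/-!
A Liar biconditional `A ↔ ¬T(⌜A⌝)` in `G(U)` forces `A` and `T(⌜A⌝)` to take opposite values.
By injectivity of `#`, `T(⌜A⌝)` is true exactly when `#A ∈ U` and false exactly when
`#¬A ∈ U`, while, as `G(U) ⊆ U`, `A` true puts `#A` into `U` and `A` false puts `#¬A` into
`U`. Either way both `#A` and `#¬A` lie in `U`, contradicting consistency.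
-/

variable {gn : Sent B → ℕ} {v : B → Bool} {U : Set ℕ}

theorem mem_GSet_iff (hgn : Function.Injective gn) (A : Sent B) :
    gn A ∈ GSet gn v U ↔ isTrue gn v U A :=
  ⟨fun ⟨_, hC, hA⟩ => hgn hC ▸ hA, fun hA => ⟨A, rfl, hA⟩⟩

theorem isTrue_Tr_gn_iff (hgn : Function.Injective gn) (A : Sent B) :
    isTrue gn v U (.Tr (gn A)) ↔ gn A ∈ U := by
  simp only [_root_.isTrue, hgn.eq_iff, exists_eq_left']

theorem isFalse_Tr_gn_iff (hgn : Function.Injective gn) (A : Sent B) :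
    isFalse gn v U (.Tr (gn A)) ↔ gn (.neg A) ∈ U := by
  simp only [_root_.isFalse, hgn.eq_iff, exists_eq_left']

theorem mem_of_isTrue (hGU : GSet gn v U ⊆ U) {A : Sent B} (hA : isTrue gn v U A) :
    gn A ∈ U :=
  hGU ⟨A, rfl, hA⟩

theorem neg_mem_of_isFalse (hGU : GSet gn v U ⊆ U) {A : Sent B} (hA : isFalse gn v U A) :
    gn (.neg A) ∈ U :=
  mem_of_isTrue hGU (A := .neg A) hA

/-- No Liar sentence: no sentence `A` of `𝓛_U` has `A ↔ ¬T(⌜A⌝)` true. -/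
theorem stmt_15 {B : Type} (gn : Sent B → ℕ) (hgn : Function.Injective gn)
    (v : B → Bool) (U : Set ℕ) (hU : Consistent gn U) (hfix : GSet gn v U = U) :
    ¬ ∃ A : Sent B, gn A ∈ GSet gn v U ∪ FSet gn v U ∧
      gn (Sent.iff A (.neg (.Tr (gn A)))) ∈ GSet gn v U := by
  rintro ⟨A, -, hliar⟩
  rw [mem_GSet_iff hgn] at hliar
  rcases hliar with ⟨hA, hTr⟩ | ⟨hA, hTr⟩
  · exact hU ⟨A, mem_of_isTrue hfix.le hA, (isFalse_Tr_gn_iff hgn A).1 hTr⟩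
  · exact hU ⟨A, (isTrue_Tr_gn_iff hgn A).1 hTr, neg_mem_of_isFalse hfix.le hA⟩
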